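/- Fix a target error probability ε̄ ∈ (0, 1/2] and a blocklength m > 0 with √m ≥ Q⁻¹(ε̄). Then for every γ ≥ 1 the partial derivative of the finite-blocklength coding rate with respect to the SINR satisfies the lower bound ∂r/∂γ (m,γ) ≥ (1 − 1/(2√3)) / ((γ+1) ln 2) > 0. -/

import Mathlib

open Real MeasureTheory

/-- The Gaussian Q-function `Q(x) = ∫ₓ^∞ (1/√(2π)) e^{−t²/2} dt`. -/
noncomputable def Qfun (x : ℝ) : ℝ :=
  ∫ t in Set.Ioi x, Real.exp (-t ^ 2 / 2) / Real.sqrt (2 * Real.pi)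

/-- Shannon capacity `C(γ) = log₂(1+γ)`. -/
noncomputable def Cap (γ : ℝ) : ℝ := Real.logb 2 (1 + γ)

/-- Channel dispersion `V(γ) = 1 − (1+γ)⁻²`. -/
noncomputable def Vdisp (γ : ℝ) : ℝ := 1 - ((1 + γ) ^ 2)⁻¹

/-- Finite-blocklength coding rate `r(m,γ) = C(γ) − √(V(γ)/m)·q`, where
`q = Q⁻¹(ε̄)` is the inverse Q-function of the target error probability. -/
noncomputable def rate (q m γ : ℝ) : ℝ := Cap γ - Real.sqrt (Vdisp γ / m) * q

lemma gauss_integrable :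
    Integrable (fun t : ℝ => Real.exp (-t ^ 2 / 2) / Real.sqrt (2 * Real.pi)) := by
  have h := (integrable_exp_neg_mul_sq (by norm_num : (0:ℝ) < 1/2)).div_const
    (Real.sqrt (2 * Real.pi))
  convert h using 2 with t
  ring_nf

lemma Qfun_zero : Qfun 0 = 1 / 2 := by
  have h2π : (0:ℝ) < Real.sqrt (2 * Real.pi) := Real.sqrt_pos.mpr (by positivity)
  have h : (∫ t in Set.Ioi (0:ℝ), Real.exp (-t ^ 2 / 2))
      = Real.sqrt (2 * Real.pi) / 2 := by
    have h0 := integral_gaussian_Ioi (1/2)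
    have he : (fun t : ℝ => Real.exp (-(1/2) * t ^ 2))
        = fun t : ℝ => Real.exp (-t ^ 2 / 2) := by funext t; ring_nf
    rw [he] at h0
    rw [h0, show Real.pi / (1/2) = 2 * Real.pi by ring]
  unfold Qfun
  rw [integral_div, h]
  field_simp

lemma q_nonneg (ε q : ℝ) (hε : ε ∈ Set.Ioc (0:ℝ) (1/2)) (hq : Qfun q = ε) : 0 ≤ q := by
  by_contra hneg
  push_neg at hneg
  have h2π : (0:ℝ) < Real.sqrt (2 * Real.pi) := Real.sqrt_pos.mpr (by positivity)
  set f : ℝ → ℝ := fun t => Real.exp (-t ^ 2 / 2) / Real.sqrt (2 * Real.pi) with hf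
  have hfpos : ∀ t, 0 < f t := fun t => div_pos (Real.exp_pos _) h2π
  have hsplit : Qfun q = (∫ t in Set.Ioc q 0, f t) + Qfun 0 := by
    unfold Qfun
    rw [← Set.Ioc_union_Ioi_eq_Ioi hneg.le,
      setIntegral_union Set.Ioc_disjoint_Ioi_same measurableSet_Ioi
        gauss_integrable.integrableOn gauss_integrable.integrableOn]
  have hpos : 0 < ∫ t in Set.Ioc q 0, f t := by
    rw [setIntegral_pos_iff_support_of_nonneg_ae
      (Filter.Eventually.of_forall fun t => (hfpos t).le) gauss_integrable.integrableOn]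
    have hsupp : Function.support f = Set.univ := by
      ext t; simp [Function.mem_support, (hfpos t).ne']
    rw [hsupp, Set.univ_inter, Real.volume_Ioc]
    simp [hneg]
  have h12 : (1:ℝ)/2 < Qfun q := by rw [hsplit, Qfun_zero]; linarith
  rw [hq] at h12
  linarith [hε.2]

lemma Vdisp_lb (γ : ℝ) (hγ : 1 ≤ γ) : (3:ℝ)/4 ≤ Vdisp γ := by
  have h4 : (4:ℝ) ≤ (1 + γ) ^ 2 := by nlinarith
  have h : ((1 + γ) ^ 2)⁻¹ ≤ 1/4 := by
    rw [inv_le_comm₀ (by positivity) (by norm_num)]; linarith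
  unfold Vdisp; linarith

lemma rate_hasDerivAt (q m γ : ℝ) (hm : 0 < m) (hγ : 1 ≤ γ) :
    HasDerivAt (fun x => rate q m x)
      (1 / ((1 + γ) * Real.log 2)
        - q * ((2 / (1 + γ) ^ 3) / m) / (2 * Real.sqrt (Vdisp γ / m))) γ := by
  have h1γ : (0:ℝ) < 1 + γ := by linarith
  have hV := Vdisp_lb γ hγ
  have hVm : (0:ℝ) < Vdisp γ / m := div_pos (by linarith) hm
  have h1 : HasDerivAt (fun x : ℝ => 1 + x) 1 γ := (hasDerivAt_id γ).const_add 1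
  have hCap : HasDerivAt (fun x => Cap x) (1 / ((1 + γ) * Real.log 2)) γ := by
    have hlog : HasDerivAt (fun x : ℝ => Real.log (1 + x)) (1 / (1 + γ)) γ := by
      simpa using h1.log h1γ.ne'
    have h2 := hlog.div_const (Real.log 2)
    have heq : (fun x : ℝ => Real.log (1 + x) / Real.log 2) = fun x => Cap x := by
      funext x; simp [Cap, Real.logb]
    rw [heq] at h2
    rw [div_div] at h2; exact h2
  have hp : HasDerivAt (fun x : ℝ => (1 + x) ^ 2) (2 * (1 + γ)) γ := by
    simpa using h1.fun_pow 2
  have hinv : HasDerivAt (fun x : ℝ => ((1 + x) ^ 2)⁻¹)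
      (-(2 * (1 + γ)) / ((1 + γ) ^ 2) ^ 2) γ := by
    have := hp.fun_inv (by positivity : (1 + γ) ^ 2 ≠ 0)
    convert this using 1
  have hVd : HasDerivAt (fun x => Vdisp x) (2 / (1 + γ) ^ 3) γ := by
    have h3 := hinv.const_sub 1
    have heq : (fun x : ℝ => 1 - ((1 + x) ^ 2)⁻¹) = fun x => Vdisp x := by
      funext x; simp [Vdisp]
    rw [heq] at h3
    refine h3.congr_deriv ?_
    field_simp
  have hs : HasDerivAt (fun x => Real.sqrt (Vdisp x / m))
      ((2 / (1 + γ) ^ 3 / m) / (2 * Real.sqrt (Vdisp γ / m))) γ :=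
    (hVd.div_const m).sqrt hVm.ne'
  have hfin := hCap.fun_sub (hs.mul_const q)
  have heq : (fun x => Cap x - Real.sqrt (Vdisp x / m) * q) = fun x => rate q m x := by
    funext x; simp [rate]
  rw [heq] at hfin
  refine hfin.congr_deriv ?_
  ring

/-- For a target error probability `ε̄ ∈ (0,1/2]` with `q = Q⁻¹(ε̄)` and a blocklength
`m > 0` with `√m ≥ q`, for every `γ ≥ 1` the partial derivative of the FBL coding
rate with respect to the SINR satisfies
`∂r/∂γ (m,γ) ≥ (1 − 1/(2√3)) / ((γ+1) ln 2) > 0`. -/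
theorem rate_deriv_snr_lower_bound (m ε q : ℝ) (hm : 0 < m)
    (hε : ε ∈ Set.Ioc (0 : ℝ) (1 / 2)) (hq : Qfun q = ε) (hmq : q ≤ Real.sqrt m) :
    ∀ γ : ℝ, 1 ≤ γ →
      (1 - 1 / (2 * Real.sqrt 3)) / ((γ + 1) * Real.log 2) ≤
        deriv (fun x => rate q m x) γ ∧
      0 < (1 - 1 / (2 * Real.sqrt 3)) / ((γ + 1) * Real.log 2) := by
  intro γ hγ
  have hq0 : 0 ≤ q := q_nonneg ε q hε hq
  have h3 : (0:ℝ) < Real.sqrt 3 := Real.sqrt_pos.mpr (by norm_num)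
  have h3sq : Real.sqrt 3 * Real.sqrt 3 = 3 := Real.mul_self_sqrt (by norm_num)
  have h31 : (1:ℝ) ≤ Real.sqrt 3 := by nlinarith
  have hlog2 : (0:ℝ) < Real.log 2 := Real.log_pos (by norm_num)
  have hlog2' : Real.log 2 < 1 := by
    have := Real.log_two_lt_d9; linarith
  have h1γ : (0:ℝ) < 1 + γ := by linarith
  have hu : (2:ℝ) ≤ γ + 1 := by linarith
  have hpos : 0 < (1 - 1 / (2 * Real.sqrt 3)) / ((γ + 1) * Real.log 2) := by
    apply div_pos _ (by positivity)
    have : 1 / (2 * Real.sqrt 3) ≤ 1/2 := by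
      rw [div_le_div_iff₀ (by positivity) (by norm_num)]; nlinarith
    linarith
  refine ⟨?_, hpos⟩
  rw [(rate_hasDerivAt q m γ hm hγ).deriv]
  have hV := Vdisp_lb γ hγ
  set s := Real.sqrt (Vdisp γ / m) with hsdef
  have hsm : (0:ℝ) < Real.sqrt m := Real.sqrt_pos.mpr hm
  have hsmsq : Real.sqrt m * Real.sqrt m = m := Real.mul_self_sqrt hm.le
  have hslb : Real.sqrt 3 / (2 * Real.sqrt m) ≤ s := by
    have h1 : Real.sqrt ((3/4) / m) ≤ s :=
      Real.sqrt_le_sqrt (by gcongr)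
    have h2 : Real.sqrt ((3/4) / m) = Real.sqrt 3 / (2 * Real.sqrt m) := by
      rw [Real.sqrt_div (by norm_num : (0:ℝ) ≤ 3/4) m,
        show (3:ℝ)/4 = 3 / 2 ^ 2 by norm_num,
        Real.sqrt_div (by norm_num : (0:ℝ) ≤ 3) ((2:ℝ) ^ 2),
        Real.sqrt_sq (by norm_num : (0:ℝ) ≤ 2), div_div]
    rw [← h2]; exact h1
  have hspos : 0 < s := lt_of_lt_of_le (by positivity) hslb
  have hkey : q * ((2 / (1 + γ) ^ 3) / m) / (2 * s)
      ≤ (1 / (2 * Real.sqrt 3)) / ((γ + 1) * Real.log 2) := by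
    have hstep1 : q * ((2 / (1 + γ) ^ 3) / m) / (2 * s)
        ≤ Real.sqrt m * ((2 / (1 + γ) ^ 3) / m)
          / (2 * (Real.sqrt 3 / (2 * Real.sqrt m))) := by
      apply div_le_div₀ (by positivity)
        (mul_le_mul_of_nonneg_right hmq (by positivity)) (by positivity)
      linarith
    have hstep2 : Real.sqrt m * ((2 / (1 + γ) ^ 3) / m)
          / (2 * (Real.sqrt 3 / (2 * Real.sqrt m)))
        = 2 / ((1 + γ) ^ 3 * Real.sqrt 3) := by
      field_simp
      linear_combination hsmsq
    have hstep3 : 2 / ((1 + γ) ^ 3 * Real.sqrt 3)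
        ≤ (1 / (2 * Real.sqrt 3)) / ((γ + 1) * Real.log 2) := by
      rw [div_le_div_iff₀ (by positivity) (by positivity)]
      have he : 1 / (2 * Real.sqrt 3) * ((1 + γ) ^ 3 * Real.sqrt 3) = (1 + γ) ^ 3 / 2 := by
        field_simp
      rw [he]
      nlinarith [sq_nonneg (γ + 1), mul_pos h1γ hlog2]
    calc q * ((2 / (1 + γ) ^ 3) / m) / (2 * s)
        ≤ Real.sqrt m * ((2 / (1 + γ) ^ 3) / m)
          / (2 * (Real.sqrt 3 / (2 * Real.sqrt m))) := hstep1
      _ = 2 / ((1 + γ) ^ 3 * Real.sqrt 3) := hstep2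
      _ ≤ (1 / (2 * Real.sqrt 3)) / ((γ + 1) * Real.log 2) := hstep3
  have hsub : (1 - 1 / (2 * Real.sqrt 3)) / ((γ + 1) * Real.log 2)
      = 1 / ((1 + γ) * Real.log 2) - (1 / (2 * Real.sqrt 3)) / ((γ + 1) * Real.log 2) := by
    rw [sub_div, show γ + 1 = 1 + γ by ring]
  rw [hsub]
  linarith [hkey]
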